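/- arXiv:1811.04530 — 2 statements merged into one kernel-verified Lean document; each statement's English description precedes it below -/
import Mathlib

section
/- For all complex s on the critical line, i.e. s = 1/2 + it with t real, the absolute value of Z_1(s) equals the absolute value of Z'(t), where Z is Hardy's Z-function. -/
open Complex Real

/-- The factor `χ(s) = 2^s π^(s-1) sin(πs/2) Γ(1-s)` from the functional equation of `ζ`. -/
noncomputable def chi (s : ℂ) : ℂ :=
  2 ^ s * (π : ℂ) ^ (s - 1) * Complex.sin (π * s / 2) * Complex.Gamma (1 - s)

/-- `Z₁(s) = ζ'(s) - (1/2)(χ'/χ)(s) ζ(s)`. -/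
noncomputable def Z1 (s : ℂ) : ℂ :=
  deriv riemannZeta s - (1 / 2) * (deriv chi s / chi s) * riemannZeta s

/-! Differentiating `χ(1/2 + it) = e^{-2iθ(t)}` in `t` gives `ω(1/2 + it) = -2θ'(t)`, so
`Z₁(1/2 + it) = ζ'(1/2 + it) + θ'(t) ζ(1/2 + it)`. Differentiating `Z(t) = e^{iθ(t)} ζ(1/2 + it)`
gives `Z'(t) = i e^{iθ(t)} Z₁(1/2 + it)`, and `|i e^{iθ(t)}| = 1` since `θ` is real. -/

theorem HasDerivAt.comp_vertical_line {f : ℂ → ℂ} {f' c : ℂ} {t : ℝ}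
    (hf : HasDerivAt f f' (c + t * I)) : HasDerivAt (fun u : ℝ => f (c + u * I)) (I * f') t := by
  have hline : HasDerivAt (fun u : ℝ => c + u * I) I t := by
    simpa using ((hasDerivAt_id t).ofReal_comp.mul_const I).const_add c
  exact hf.scomp t hline

theorem differentiableAt_chi {s : ℂ} (hs : ∀ n : ℕ, 1 - s ≠ -n) : DifferentiableAt ℂ chi s := by
  have hpi : (π : ℂ) ≠ 0 := ofReal_ne_zero.mpr pi_ne_zero
  have hGamma : DifferentiableAt ℂ (fun z : ℂ => Gamma (1 - z)) s :=
    (differentiableAt_Gamma _ hs).comp s ((differentiableAt_const 1).sub differentiableAt_id)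
  unfold chi
  exact (((differentiableAt_id.const_cpow (Or.inl two_ne_zero)).mul
    ((differentiableAt_id.sub_const 1).const_cpow (Or.inl hpi))).mul
    ((differentiableAt_id.const_mul (π : ℂ)).div_const 2).csin).mul hGamma

theorem deriv_div_eq_of_vertical_line_eq_exp {f : ℂ → ℂ} {g : ℝ → ℂ} {g' c : ℂ} {t : ℝ}
    (hf : DifferentiableAt ℂ f (c + t * I)) (hg : HasDerivAt g g' t)
    (hfg : ∀ u : ℝ, f (c + u * I) = exp (g u)) :
    deriv f (c + t * I) / f (c + t * I) = -I * g' := by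
  have hline : HasDerivAt (fun u : ℝ => exp (g u)) (I * deriv f (c + t * I)) t := by
    simpa only [hfg] using hf.hasDerivAt.comp_vertical_line
  have hderiv : I * deriv f (c + t * I) = exp (g t) * g' := hline.unique hg.cexp
  rw [hfg t, div_eq_iff (Complex.exp_ne_zero _)]
  linear_combination (-I) * hderiv + deriv f (c + t * I) * I_sq

theorem ne_neg_natCast_of_re_lt_one {s : ℂ} (hs : s.re < 1) (n : ℕ) : 1 - s ≠ -n := by
  intro h
  have hre := congrArg re h
  simp only [sub_re, one_re, neg_re, natCast_re] at hre
  linarith [n.cast_nonneg (α := ℝ)]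

theorem Z1_criticalLine_eq {θ : ℝ → ℝ} {t : ℝ} (hθ : DifferentiableAt ℝ θ t)
    (hχθ : ∀ u : ℝ, chi (1 / 2 + u * I) = exp (-(2 * I * θ u))) :
    Z1 (1 / 2 + t * I) = deriv riemannZeta (1 / 2 + t * I) +
      ((deriv θ t : ℝ) : ℂ) * riemannZeta (1 / 2 + t * I) := by
  have hre : (1 / 2 + t * I).re < 1 := by norm_num
  have hω := deriv_div_eq_of_vertical_line_eq_exp
    (differentiableAt_chi (ne_neg_natCast_of_re_lt_one hre))
    ((hθ.hasDerivAt.ofReal_comp.const_mul (2 * I)).neg) hχθ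
  rw [Z1, hω]
  linear_combination (-riemannZeta (1 / 2 + t * I) * ((deriv θ t : ℝ) : ℂ)) * I_sq

theorem hasDerivAt_hardyZ {θ : ℝ → ℝ} {Z : ℝ → ℂ} {t : ℝ} (hθ : DifferentiableAt ℝ θ t)
    (hχθ : ∀ u : ℝ, chi (1 / 2 + u * I) = exp (-(2 * I * θ u)))
    (hZ : ∀ u : ℝ, Z u = exp (I * θ u) * riemannZeta (1 / 2 + u * I)) :
    HasDerivAt Z (I * exp (I * θ t) * Z1 (1 / 2 + t * I)) t := by
  have hs : 1 / 2 + t * I ≠ 1 := fun h => by simpa using congrArg re h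
  have hζ := (differentiableAt_riemannZeta hs).hasDerivAt.comp_vertical_line
  have hprod := (hθ.hasDerivAt.ofReal_comp.const_mul I).cexp.mul hζ
  rw [funext hZ, Z1_criticalLine_eq hθ hχθ]
  exact hprod.congr_deriv (by ring)

theorem stmt0 (θ : ℝ → ℝ) (Z : ℝ → ℂ)
    (hθ : Differentiable ℝ θ)
    (hχθ : ∀ t : ℝ, chi (1 / 2 + t * I) = Complex.exp (-(2 * I * θ t)))
    (hZ : ∀ t : ℝ, Z t = Complex.exp (I * θ t) * riemannZeta (1 / 2 + t * I)) :
    ∀ t : ℝ, ‖Z1 (1 / 2 + t * I)‖ = ‖deriv Z t‖ := by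
  intro t
  rw [(hasDerivAt_hardyZ (hθ t) hχθ hZ).deriv, norm_mul, norm_mul, norm_I,
    norm_exp_I_mul_ofReal, one_mul, one_mul]
end

section
/- For all n ≥ 1, Λ(n) log n + (Λ*Λ)(n) = ∑_{d|n} μ(d) (log(n/d))^2, where (Λ*Λ)(n) = ∑_{d|n} Λ(d) Λ(n/d). -/
open ArithmeticFunction
open scoped ArithmeticFunction.zeta ArithmeticFunction.Moebius

lemma pmul_log_mul (f g : ArithmeticFunction ℝ) :
    (f * g).pmul log = (f.pmul log) * g + f * (g.pmul log) := by
  ext n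
  simp only [pmul_apply, mul_apply, ArithmeticFunction.add_apply, log_apply, Finset.sum_mul, ← Finset.sum_add_distrib]
  refine Finset.sum_congr rfl fun p hp => ?_
  obtain ⟨h1, h2⟩ := Nat.mem_divisorsAntidiagonal.mp hp
  have ha : p.1 ≠ 0 := fun h => h2 (by simp [← h1, h])
  have hb : p.2 ≠ 0 := fun h => h2 (by simp [← h1, h])
  rw [← h1]
  push_cast
  rw [Real.log_mul (by exact_mod_cast ha) (by exact_mod_cast hb)]
  ring

lemma moebius_pmul_log : ((μ : ArithmeticFunction ℝ).pmul log) = -((μ : ArithmeticFunction ℝ) * Λ) := by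
  have h1 : ((μ : ArithmeticFunction ℝ) * ζ).pmul log = 0 := by
    rw [coe_moebius_mul_coe_zeta]
    ext n
    simp only [pmul_apply, one_apply, ArithmeticFunction.zero_apply, log_apply]
    rcases eq_or_ne n 1 with h | h <;> simp [h]
  have h2 := pmul_log_mul (μ : ArithmeticFunction ℝ) (ζ : ArithmeticFunction ℝ)
  rw [h1, pmul_comm (ζ : ArithmeticFunction ℝ) log] at h2
  rw [pmul_comm log (ζ : ArithmeticFunction ℝ), zeta_pmul] at h2
  rw [moebius_mul_log_eq_vonMangoldt] at h2
  have h3 : ((μ : ArithmeticFunction ℝ).pmul log) * ζ = -((μ : ArithmeticFunction ℝ) * Λ) * ζ := by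
    rw [neg_mul, mul_assoc, vonMangoldt_mul_zeta, moebius_mul_log_eq_vonMangoldt]
    linear_combination -h2
  calc ((μ : ArithmeticFunction ℝ).pmul log)
      = ((μ : ArithmeticFunction ℝ).pmul log) * (ζ * μ) := by rw [coe_zeta_mul_coe_moebius, mul_one]
    _ = (((μ : ArithmeticFunction ℝ).pmul log) * ζ) * μ := by ring
    _ = (-((μ : ArithmeticFunction ℝ) * Λ) * ζ) * μ := by rw [h3]
    _ = -((μ : ArithmeticFunction ℝ) * Λ) * (ζ * μ) := by ring
    _ = -((μ : ArithmeticFunction ℝ) * Λ) := by rw [coe_zeta_mul_coe_moebius, mul_one]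

lemma selberg_fun : vonMangoldt.pmul log + Λ * Λ = (μ : ArithmeticFunction ℝ) * (log.pmul log) := by
  calc vonMangoldt.pmul log + Λ * Λ
      = ((μ : ArithmeticFunction ℝ) * log).pmul log + ((μ : ArithmeticFunction ℝ) * log) * Λ := by
        rw [moebius_mul_log_eq_vonMangoldt]
    _ = ((μ : ArithmeticFunction ℝ).pmul log) * log + (μ : ArithmeticFunction ℝ) * (log.pmul log)
          + ((μ : ArithmeticFunction ℝ) * log) * Λ := by rw [pmul_log_mul]
    _ = (μ : ArithmeticFunction ℝ) * (log.pmul log) := by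
        rw [moebius_pmul_log]; ring


/-- Selberg's symmetry identity:
`Λ(n) log n + ∑_{d ∣ n} Λ(d) Λ(n/d) = ∑_{d ∣ n} μ(d) (log (n/d))^2`. -/
theorem stmt17 (n : ℕ) (hn : 1 ≤ n) :
    vonMangoldt n * Real.log n + ∑ d ∈ n.divisors, vonMangoldt d * vonMangoldt (n / d) =
      ∑ d ∈ n.divisors, (moebius d : ℝ) * (Real.log (n / d)) ^ 2 := by

  have h : (vonMangoldt.pmul log + Λ * Λ) n = ((μ : ArithmeticFunction ℝ) * log.pmul log) n := by
    rw [selberg_fun]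
  simp only [ArithmeticFunction.add_apply, pmul_apply, mul_apply, log_apply, intCoe_apply] at h
  rw [Nat.sum_divisorsAntidiagonal (fun a b => Λ a * Λ b),
      Nat.sum_divisorsAntidiagonal (fun a b => (μ a : ℝ) * (Real.log b * Real.log b))] at h
  rw [h]
  refine Finset.sum_congr rfl fun d hd => ?_
  obtain ⟨hdvd, hn0⟩ := Nat.mem_divisors.mp hd
  have hd0 : d ≠ 0 := fun h => hn0 (by simpa [h] using hdvd)
  rw [Nat.cast_div hdvd (by exact_mod_cast hd0), sq]
end
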